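/- Let G be a graph, R ⊆ G a subgraph, and ℓ a positive integer. Suppose that: (1) for every subset S ⊆ V(G) of size at most 2ℓ and every pair of vertices x, y ∈ V(G) \ S, there is an x–y path in R − S of length at most ℓ − 1; and (2) R ≠ G and R ≠ G[A,B] for every partition V(G) = A ∪ B. Then G contains an even cycle C of length at most 2ℓ containing an odd number of edges of R. -/

import Mathlib

/-!
Suppose there is no such cycle and fix an edge `xy` of `G` not in `R`. If `ab` is an edge of `G`
not in `R` and two `R`-paths from `a` and `b` meet only in their common end and have total
length `m < 2ℓ`, then together with `ab` they form a cycle of length `m + 1` with `m` edges of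
`R`, so `m` is even. Given two short `R`-paths from `x` to `v` avoiding `y`, the linkage
hypothesis provides a short `R`-path from `y` to `v` avoiding both; closing up through `xy`
shows that the two paths have the same parity. The same holds for paths from `y` avoiding `x`,
and the two parities agree, so the vertices reached by even paths form a set `A` with
`R = G[A, Aᶜ]`, contrary to the hypothesis.
-/

open SimpleGraph

variable {V : Type} [Fintype V] [DecidableEq V]

/-- The bipartite subgraph `G[A,B]` of edges with one endpoint in `A`, one in `B`. -/
def bipSub (G : SimpleGraph V) (A B : Set V) : SimpleGraph V where
  Adj x y := G.Adj x y ∧ ((x ∈ A ∧ y ∈ B) ∨ (x ∈ B ∧ y ∈ A))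
  symm := by
    refine ⟨?_⟩
    intro x y h
    exact ⟨h.1.symm, by tauto⟩
  loopless := by
    refine ⟨?_⟩
    intro x h
    exact G.loopless.irrefl x h.1

namespace SimpleGraph

variable {W : Type*} {G R : SimpleGraph W} {ℓ : ℕ}

def HasShortEvenCycleOddOn (G R : SimpleGraph W) (ℓ : ℕ) : Prop :=
  ∃ (u : W) (c : G.Walk u u), c.IsCycle ∧ Even c.length ∧ c.length ≤ 2 * ℓ ∧
    Odd ({e : Sym2 W | e ∈ c.edges ∧ e ∈ R.edgeSet}.ncard)

def IsRobustlyLinked (R : SimpleGraph W) (ℓ : ℕ) : Prop :=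
  ∀ S : Set W, S.ncard ≤ 2 * ℓ → ∀ x y : W, x ∉ S → y ∉ S →
    ∃ p : R.Walk x y, p.IsPath ∧ p.length ≤ ℓ - 1 ∧ ∀ z ∈ p.support, z ∉ S

theorem IsRobustlyLinked.exists_isPath (hR : R.IsRobustlyLinked ℓ) {S : Finset W}
    (hS : S.card ≤ 2 * ℓ) (x y : W) (hx : x ∉ S) (hy : y ∉ S) :
    ∃ p : R.Walk x y, p.IsPath ∧ p.length ≤ ℓ - 1 ∧ ∀ z ∈ p.support, z ∉ S :=
  hR S (by rwa [Set.ncard_coe_finset]) x y hx hy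

namespace Walk

theorem card_toFinset_support_erase_le [DecidableEq W] {u v z : W} (p : G.Walk u v)
    (hz : z ∈ p.support) : (p.support.toFinset.erase z).card ≤ p.length := by
  have := p.support.toFinset_card_le
  rw [Finset.card_erase_of_mem (List.mem_toFinset.2 hz)]
  rw [length_support] at this
  omega

theorem IsPath.append_reverse {a b w : W} {P : G.Walk a w} {Q : G.Walk b w}
    (hP : P.IsPath) (hQ : Q.IsPath) (hPQ : ∀ z ∈ P.support, z ∈ Q.support → z = w) :
    (P.append Q.reverse).IsPath := by
  have hQ' : (w :: Q.reverse.support.tail).Nodup := by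
    rw [Q.reverse.cons_tail_support]; exact hQ.reverse.support_nodup
  rw [isPath_def, support_append]
  refine hP.support_nodup.append (List.nodup_cons.1 hQ').2 fun z hzP hzQ => ?_
  have hzw := hPQ z hzP (by simpa using Q.reverse.support.mem_of_mem_tail hzQ)
  exact (List.nodup_cons.1 hQ').1 (hzw ▸ hzQ)

def IsShortPathAvoiding {r v : W} (P : G.Walk r v) (ℓ : ℕ) (s : W) : Prop :=
  P.IsPath ∧ P.length ≤ ℓ ∧ s ∉ P.support

end Walk

open Walk

theorem exists_isCycle_of_isPath (hRG : R ≤ G) {a b : W} {p : R.Walk a b} (hp : p.IsPath)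
    (hba : (G \ R).Adj b a) :
    ∃ c : G.Walk b b, c.IsCycle ∧ c.length = p.length + 1 ∧
      {e | e ∈ c.edges ∧ e ∈ R.edgeSet}.ncard = p.length := by
  classical
  refine ⟨.cons hba.1 (p.mapLe hRG), ?_, by simp, ?_⟩
  · rw [cons_isCycle_iff, edges_mapLe_eq_edges]
    exact ⟨hp.mapLe hRG, fun h => hba.2 (p.adj_of_mem_edges h)⟩
  · have hedges : {e | e ∈ (cons hba.1 (p.mapLe hRG)).edges ∧ e ∈ R.edgeSet} =
        (p.edges.toFinset : Set (Sym2 W)) := by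
      ext e
      simp only [edges_cons, edges_mapLe_eq_edges, List.mem_cons, Set.mem_ofPred_eq,
        List.coe_toFinset]
      constructor
      · rintro ⟨rfl | he, heR⟩
        · exact absurd heR hba.2
        · exact he
      · exact fun he => ⟨Or.inr he, p.edges_subset_edgeSet he⟩
    rw [hedges, Set.ncard_coe_finset, List.toFinset_card_of_nodup hp.isTrail.edges_nodup,
      length_edges]

theorem even_length_add_of_isPath (hRG : R ≤ G) (hC : ¬ G.HasShortEvenCycleOddOn R ℓ)
    {a b w : W} (hab : (G \ R).Adj a b) {P : R.Walk a w} {Q : R.Walk b w}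
    (hP : P.IsPath) (hQ : Q.IsPath) (hPQ : ∀ z ∈ P.support, z ∈ Q.support → z = w)
    (hlen : P.length + Q.length < 2 * ℓ) : Even (P.length + Q.length) := by
  by_contra hodd
  obtain ⟨c, hc, hclen, hcR⟩ := exists_isCycle_of_isPath hRG (hP.append_reverse hQ hPQ) hab.symm
  rw [length_append, length_reverse] at hclen hcR
  refine hC ⟨b, c, hc, ?_, by omega, ?_⟩
  · rw [hclen]; exact (Nat.not_even_iff_odd.1 hodd).add_one
  · rw [hcR]; exact Nat.not_even_iff_odd.1 hodd

theorem even_length_iff_of_isShortPathAvoiding (hRG : R ≤ G)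
    (hC : ¬ G.HasShortEvenCycleOddOn R ℓ) (hR : R.IsRobustlyLinked ℓ) (hℓ : 0 < ℓ) {x y v : W}
    (hxy : (G \ R).Adj x y) {P₁ P₂ : R.Walk x v} (hP₁ : P₁.IsShortPathAvoiding ℓ y)
    (hP₂ : P₂.IsShortPathAvoiding ℓ y) : Even P₁.length ↔ Even P₂.length := by
  classical
  set S := P₁.support.toFinset.erase v ∪ P₂.support.toFinset.erase v
  obtain ⟨Q, hQ, hQlen, hQS⟩ := hR.exists_isPath (S := S)
    ((Finset.card_union_le _ _).trans (by
      have := P₁.card_toFinset_support_erase_le P₁.end_mem_support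
      have := P₂.card_toFinset_support_erase_le P₂.end_mem_support
      have := hP₁.2.1
      have := hP₂.2.1
      omega))
    y v (by simp [S, hP₁.2.2, hP₂.2.2]) (by simp [S])
  -- `Q` meets each `Pᵢ` only in `v`, so closing up through the edge `xy` gives two cycles
  have hparity : ∀ P : R.Walk x v, P.IsShortPathAvoiding ℓ y →
      (∀ z ∈ P.support, z ≠ v → z ∈ S) → (Even P.length ↔ Even Q.length) := fun P hP hPS =>
    Nat.even_add.1 <| even_length_add_of_isPath hRG hC hxy hP.1 hQ
      (fun z hzP hzQ => by_contra fun hzv => hQS z hzQ (hPS z hzP hzv))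
      (by have := hP.2.1; omega)
  exact (hparity P₁ hP₁ (by simp +contextual [S])).trans
    (hparity P₂ hP₂ (by simp +contextual [S])).symm

theorem even_length_iff_of_isShortPathAvoiding_swap (hRG : R ≤ G)
    (hC : ¬ G.HasShortEvenCycleOddOn R ℓ) (hR : R.IsRobustlyLinked ℓ) (hℓ : 0 < ℓ) {x y v : W}
    (hxy : (G \ R).Adj x y) {P : R.Walk x v} {P' : R.Walk y v} (hP : P.IsShortPathAvoiding ℓ y)
    (hP' : P'.IsShortPathAvoiding ℓ x) : Even P.length ↔ Even P'.length := by
  classical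
  have hvx : v ≠ x := by rintro rfl; exact hP'.2.2 P'.end_mem_support
  obtain ⟨Q, hQ, hQlen, hQS⟩ := hR.exists_isPath (S := P.support.toFinset.erase v)
    ((P.card_toFinset_support_erase_le P.end_mem_support).trans (by have := hP.2.1; omega))
    y v (by simp [hP.2.2]) (by simp)
  have hQx : x ∉ Q.support := fun hx => hQS x hx (by simp [hvx.symm])
  have hPQ : Even P.length ↔ Even Q.length :=
    Nat.even_add.1 <| even_length_add_of_isPath hRG hC hxy hP.1 hQ
      (fun z hzP hzQ => by_contra fun hzv => hQS z hzQ (by simp [hzv, hzP]))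
      (by have := hP.2.1; omega)
  exact hPQ.trans (even_length_iff_of_isShortPathAvoiding hRG hC hR hℓ hxy.symm
    ⟨hQ, by omega, hQx⟩ hP')

def evenSide (R : SimpleGraph W) (ℓ : ℕ) (x y : W) : Set W :=
  {v | (∃ P : R.Walk x v, P.IsShortPathAvoiding ℓ y ∧ Even P.length) ∨
    ∃ P : R.Walk y v, P.IsShortPathAvoiding ℓ x ∧ Even P.length}

theorem evenSide_comm (x y : W) : R.evenSide ℓ x y = R.evenSide ℓ y x :=
  Set.ext fun _ => or_comm

theorem mem_evenSide_iff (hRG : R ≤ G) (hC : ¬ G.HasShortEvenCycleOddOn R ℓ)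
    (hR : R.IsRobustlyLinked ℓ) (hℓ : 0 < ℓ) {x y v : W} (hxy : (G \ R).Adj x y)
    {P : R.Walk x v} (hP : P.IsShortPathAvoiding ℓ y) :
    v ∈ R.evenSide ℓ x y ↔ Even P.length := by
  refine ⟨?_, fun h => Or.inl ⟨P, hP, h⟩⟩
  rintro (⟨P', hP', h⟩ | ⟨P', hP', h⟩)
  · exact (even_length_iff_of_isShortPathAvoiding hRG hC hR hℓ hxy hP hP').2 h
  · exact (even_length_iff_of_isShortPathAvoiding_swap hRG hC hR hℓ hxy hP hP').2 h

theorem adj_iff_mem_evenSide_iff_not_mem_of_ne (hRG : R ≤ G)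
    (hC : ¬ G.HasShortEvenCycleOddOn R ℓ) (hR : R.IsRobustlyLinked ℓ) (hℓ : 0 < ℓ)
    {x y u v : W} (hxy : (G \ R).Adj x y) (huv : G.Adj u v) (huy : u ≠ y) (hvx : v ≠ x)
    (hvy : v ≠ y) : R.Adj u v ↔ (u ∈ R.evenSide ℓ x y ↔ v ∉ R.evenSide ℓ x y) := by
  classical
  obtain ⟨P₁, hP₁, hP₁len, hP₁S⟩ := hR.exists_isPath (S := {y, v})
    (Finset.card_le_two.trans (by omega)) x u (by simp [hxy.ne, hvx.symm])
    (by simp [huy, huv.ne])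
  have hP₁' : P₁.IsShortPathAvoiding ℓ y := ⟨hP₁, by omega, fun h => hP₁S y h (by simp)⟩
  rw [mem_evenSide_iff hRG hC hR hℓ hxy hP₁']
  have hvP₁ : v ∉ P₁.support := fun h => hP₁S v h (by simp)
  constructor
  · intro hRuv
    have hP₁v : (P₁.concat hRuv).IsShortPathAvoiding ℓ y :=
      ⟨hP₁.concat hvP₁ hRuv, by rw [length_concat]; omega,
        by simp [support_concat, hvy.symm, hP₁'.2.2]⟩
    rw [mem_evenSide_iff hRG hC hR hℓ hxy hP₁v, length_concat, Nat.even_add_one, not_not]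
  · intro hparity
    by_contra hnRuv
    obtain ⟨P₂, hP₂, hP₂len, hP₂S⟩ :=
      hR.exists_isPath (S := insert y (P₁.support.toFinset.erase x))
      ((Finset.card_insert_le _ _).trans (by
        have := P₁.card_toFinset_support_erase_le P₁.start_mem_support
        omega))
      x v (by simp [hxy.ne]) (by simp [hvy, hvP₁])
    have hP₂' : P₂.IsShortPathAvoiding ℓ y := ⟨hP₂, by omega, fun h => hP₂S y h (by simp)⟩
    -- `P₁` and `P₂` meet only in `x`, so together with the edge `uv` they close a cycle
    have hP₁P₂ := Nat.even_add.1 <| even_length_add_of_isPath hRG hC (a := u) (b := v) ⟨huv, hnRuv⟩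
      hP₁.reverse hP₂.reverse (fun z hz₁ hz₂ => by
        rw [support_reverse, List.mem_reverse] at hz₁ hz₂
        exact by_contra fun hzx => hP₂S z hz₂ (by simp [hzx, hz₁]))
      (by rw [length_reverse, length_reverse]; omega)
    rw [length_reverse, length_reverse] at hP₁P₂
    rw [mem_evenSide_iff hRG hC hR hℓ hxy hP₂'] at hparity
    tauto

theorem adj_iff_mem_evenSide_iff_not_mem (hRG : R ≤ G) (hC : ¬ G.HasShortEvenCycleOddOn R ℓ)
    (hR : R.IsRobustlyLinked ℓ) (hℓ : 0 < ℓ) {x y u v : W} (hxy : (G \ R).Adj x y)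
    (huv : G.Adj u v) : R.Adj u v ↔ (u ∈ R.evenSide ℓ x y ↔ v ∉ R.evenSide ℓ x y) := by
  set A := R.evenSide ℓ x y
  have hxA : x ∈ A := Or.inl ⟨.nil, ⟨.nil, Nat.zero_le _, by simp [hxy.ne']⟩, .zero⟩
  have hyA : y ∈ A := Or.inr ⟨.nil, ⟨.nil, Nat.zero_le _, by simp [hxy.ne]⟩, .zero⟩
  -- an edge with an end `v ∉ {x, y}` is seen from the root `y` if its other end is `y`,
  -- and from the root `x` otherwise
  have hmain : ∀ {u v}, G.Adj u v → v ≠ x → v ≠ y → (R.Adj u v ↔ (u ∈ A ↔ v ∉ A)) := by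
    intro u v huv hvx hvy
    by_cases huy : u = y
    · subst huy
      simpa only [A, evenSide_comm x] using
        adj_iff_mem_evenSide_iff_not_mem_of_ne hRG hC hR hℓ hxy.symm huv hxy.ne' hvy hvx
    · exact adj_iff_mem_evenSide_iff_not_mem_of_ne hRG hC hR hℓ hxy huv huy hvx hvy
  by_cases hv : v ≠ x ∧ v ≠ y
  · exact hmain huv hv.1 hv.2
  by_cases hu : u ≠ x ∧ u ≠ y
  · rw [R.adj_comm, hmain huv.symm hu.1 hu.2, iff_not_comm]
  obtain ⟨rfl | rfl, rfl | rfl⟩ : (u = x ∨ u = y) ∧ (v = x ∨ v = y) := by tauto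
  · exact absurd huv G.irrefl
  · simpa [hxA, hyA] using hxy.2
  · simpa [hxA, hyA] using hxy.symm.2
  · exact absurd huv G.irrefl

end SimpleGraph

theorem eq_bipSub_compl {W : Type} {G R : SimpleGraph W} (hRG : R ≤ G) {A : Set W}
    (h : ∀ u v, G.Adj u v → (R.Adj u v ↔ (u ∈ A ↔ v ∉ A))) : R = bipSub G A Aᶜ := by
  ext u v
  refine ⟨fun huv => ⟨hRG huv, ?_⟩, fun ⟨huv, hcut⟩ => (h u v huv).2 ?_⟩
  · have := (h u v (hRG huv)).1 huv
    simp only [Set.mem_compl_iff]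
    tauto
  · simp only [Set.mem_compl_iff] at hcut
    tauto

/-- The Cycle Lemma: if `R ⊆ G` is a highly connected "robust" subgraph which is neither
`G` nor a bipartite cut subgraph of `G`, then `G` has a short even cycle with an odd
number of `R`-edges. -/
theorem stmt9 (G R : SimpleGraph V) (ℓ : ℕ) (hℓ : 0 < ℓ) (hRG : R ≤ G)
    (h1 : ∀ S : Set V, S.ncard ≤ 2 * ℓ → ∀ x y : V, x ∉ S → y ∉ S →
      ∃ p : R.Walk x y, p.IsPath ∧ p.length ≤ ℓ - 1 ∧ ∀ z ∈ p.support, z ∉ S)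
    (h2 : R ≠ G)
    (h3 : ∀ A B : Set V, Disjoint A B → A ∪ B = Set.univ → R ≠ bipSub G A B) :
    ∃ (u : V) (c : G.Walk u u), c.IsCycle ∧ Even c.length ∧ c.length ≤ 2 * ℓ ∧
      Odd ({e : Sym2 V | e ∈ c.edges ∧ e ∈ R.edgeSet}.ncard) := by
  by_contra hC
  obtain ⟨x, y, hxy⟩ : ∃ x y, (G \ R).Adj x y :=
    ne_bot_iff_exists_adj.1 fun h => h2 (le_antisymm hRG (sdiff_eq_bot_iff.1 h))
  exact h3 _ _ disjoint_compl_right (Set.union_compl_self _)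
    (eq_bipSub_compl hRG fun u v => adj_iff_mem_evenSide_iff_not_mem hRG hC h1 hℓ hxy)
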